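/- Let d ≥ 1 be an integer, let P be a finite set of points in ℝ^d, and let B be a closed ball with |B ∩ P| = j for some integer j ≥ 1. Then there exists a closed ball B' such that B' ∩ P ⊆ B ∩ P and |B' ∩ P| = j − 1. -/

import Mathlib

/-!
Let `S` be the set of points of `P` in the ball and `p ∈ S` a point farthest from the centre `c`.
Pushing the centre slightly away from `p`, to `c' = c - t (p - c)`, makes `p` the unique farthest
point of `S` from `c'` (strict convexity of the norm), so the closed ball about `c'` through the
second farthest point of `S` meets `S` exactly in `S \ {p}`. Since `P` is finite, for `t` small
this ball picks up no point of `P` outside the original ball. If the ball holds at most one point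
of `P`, a degenerate ball `{z}` with `z ∉ P` will do.
-/

open Metric Set Filter Topology AffineMap

theorem Set.Finite.exists_pos_inter_closedBall_add_eq {α : Type*} [PseudoMetricSpace α]
    {P : Set α} (hP : P.Finite) (c : α) (r : ℝ) :
    ∃ ε > 0, P ∩ closedBall c (r + ε) = P ∩ closedBall c r := by
  have hgap : ∀ᶠ ε in 𝓝[>] (0 : ℝ), ∀ y ∈ P, dist y c ≤ r + ε → dist y c ≤ r := by
    rw [hP.eventually_all]
    intro y _
    by_cases hy : dist y c ≤ r
    · exact .of_forall fun _ _ => hy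
    · filter_upwards [nhdsWithin_le_nhds (eventually_lt_nhds (sub_pos.2 (not_le.1 hy)))]
        with ε hε hyε
      linarith
  obtain ⟨ε, hεgap, hε : 0 < ε⟩ := (hgap.and self_mem_nhdsWithin).exists
  refine ⟨ε, hε, Subset.antisymm (fun y hy => ⟨hy.1, hεgap y hy.1 hy.2⟩) ?_⟩
  exact inter_subset_inter_right _ (closedBall_subset_closedBall (by linarith))

section StrictConvex

variable {E : Type*} [NormedAddCommGroup E] [NormedSpace ℝ E] [StrictConvexSpace ℝ E]

theorem norm_add_smul_lt_of_norm_le {x p : E} {t : ℝ} (hx : ‖x‖ ≤ ‖p‖) (hxp : x ≠ p)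
    (ht : 0 < t) : ‖x + t • p‖ < (1 + t) * ‖p‖ := by
  have hnorm : ‖t • p‖ = t * ‖p‖ := by rw [norm_smul, Real.norm_of_nonneg ht.le]
  by_cases hray : SameRay ℝ x p
  · have hlt : ‖x‖ < ‖p‖ := hx.lt_of_ne fun h => hxp (hray.eq_of_norm_eq h)
    calc ‖x + t • p‖ ≤ ‖x‖ + ‖t • p‖ := norm_add_le _ _
      _ < (1 + t) * ‖p‖ := by rw [hnorm]; linarith
  · have hray' : ¬SameRay ℝ x (t • p) := fun h => hray <| by
      simpa [inv_smul_smul₀ ht.ne'] using h.pos_smul_right (inv_pos.2 ht)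
    calc ‖x + t • p‖ < ‖x‖ + ‖t • p‖ := norm_add_lt_of_not_sameRay hray'
      _ ≤ (1 + t) * ‖p‖ := by rw [hnorm]; linarith

theorem dist_lt_dist_homothety_neg {x p c : E} {t : ℝ} (hx : dist x c ≤ dist p c) (hxp : x ≠ p)
    (ht : 0 < t) : dist x (homothety c (-t) p) < dist p (homothety c (-t) p) := by
  have hxc : x - homothety c (-t) p = (x - c) + t • (p - c) := by
    rw [homothety_apply, vsub_eq_sub, vadd_eq_add]; module
  rw [dist_self_homothety, sub_neg_eq_add, Real.norm_of_nonneg (by linarith), dist_eq_norm x, hxc,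
    dist_comm, dist_eq_norm p c]
  rw [dist_eq_norm, dist_eq_norm] at hx
  exact norm_add_smul_lt_of_norm_le hx (sub_left_injective.ne hxp) ht

theorem Set.Finite.exists_closedBall_inter_eq_sdiff_singleton {P : Set E} (hP : P.Finite)
    {c : E} {r : ℝ} (hS : (P ∩ closedBall c r).Nontrivial) :
    ∃ p ∈ P ∩ closedBall c r, ∃ c' r', 0 ≤ r' ∧
      P ∩ closedBall c' r' = (P ∩ closedBall c r) \ {p} := by
  set S := P ∩ closedBall c r
  have hSfin : S.Finite := hP.inter_of_left _
  obtain ⟨p, hpS, hpmax⟩ := exists_max_image S (dist · c) hSfin hS.nonempty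
  obtain ⟨ε, hε, hgap⟩ := hP.exists_pos_inter_closedBall_add_eq c r
  set ρ := dist p c
  set t := ε / (2 * ρ + 1)
  have ht : 0 < t := by positivity
  have htρ : 2 * t * ρ ≤ ε := by
    have : t * (2 * ρ + 1) = ε := div_mul_cancel₀ _ (by positivity)
    nlinarith
  set c' := homothety c (-t) p
  obtain ⟨q₀, hq₀S, hq₀p⟩ := hS.exists_ne p
  obtain ⟨q, hqS, hqmax⟩ :=
    exists_max_image (S \ {p}) (dist · c') hSfin.sdiff ⟨q₀, hq₀S, hq₀p⟩
  have hqp : dist q c' < dist p c' := dist_lt_dist_homothety_neg (hpmax q hqS.1) hqS.2 ht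
  have hc'c : dist c' c = t * ρ := by
    rw [dist_homothety_center, norm_neg, Real.norm_of_nonneg ht.le, dist_comm]
  have hpc' : dist p c' = (1 + t) * ρ := by
    rw [dist_self_homothety, sub_neg_eq_add, Real.norm_of_nonneg (by positivity), dist_comm]
  refine ⟨p, hpS, c', dist q c', dist_nonneg,
    Subset.antisymm ?_ fun x hx => ⟨hx.1.1, hqmax x hx⟩⟩
  rintro y ⟨hyP, hy⟩
  have hyc : dist y c ≤ r + ε :=
    calc dist y c ≤ dist y c' + dist c' c := dist_triangle _ _ _
      _ ≤ (1 + t) * ρ + t * ρ := by rw [hc'c, ← hpc']; linarith [mem_closedBall.1 hy]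
      _ ≤ r + ε := by linarith [mem_closedBall.1 hpS.2]
  have hyS : y ∈ S := hgap.subset ⟨hyP, hyc⟩
  exact ⟨hyS, fun hyp => (hqp.trans_le ((mem_singleton_iff.1 hyp) ▸ hy)).false⟩

end StrictConvex

theorem ball_shrinking_one_general
    (d : ℕ) (hd : 1 ≤ d)
    (P : Set (EuclideanSpace ℝ (Fin d))) (hP : P.Finite)
    (c : EuclideanSpace ℝ (Fin d)) (r : ℝ)
    (j : ℕ)
    (hcard : (P ∩ Metric.closedBall c r).ncard = j) :
    ∃ (c' : EuclideanSpace ℝ (Fin d)) (r' : ℝ), 0 ≤ r' ∧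
      P ∩ Metric.closedBall c' r' ⊆ P ∩ Metric.closedBall c r ∧
      (P ∩ Metric.closedBall c' r').ncard = j - 1 := by
  by_cases hS : (P ∩ closedBall c r).Nontrivial
  · obtain ⟨p, hp, c', r', hr', heq⟩ := hP.exists_closedBall_inter_eq_sdiff_singleton hS
    refine ⟨c', r', hr', heq ▸ sdiff_subset, ?_⟩
    rw [heq, ncard_sdiff_singleton_of_mem hp, hcard]
  · have : Nonempty (Fin d) := ⟨⟨0, hd⟩⟩
    obtain ⟨z, hz⟩ := hP.infinite_compl.nonempty
    have hempty : P ∩ closedBall z 0 = ∅ := by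
      rw [closedBall_zero, inter_singleton_eq_empty]
      exact hz
    have hj : j ≤ 1 := hcard ▸ (ncard_le_one (hP.inter_of_left _)).2 (not_nontrivial_iff.1 hS)
    refine ⟨z, 0, le_rfl, hempty ▸ empty_subset _, ?_⟩
    rw [hempty, ncard_empty]
    omega

/-- Shrinking lemma for balls: for `d ≥ 1`, if a closed ball
`B ⊆ ℝ^d` contains exactly `j ≥ 1` points of a finite point set `P`, then
there is a closed ball `B'` with `B' ∩ P ⊆ B ∩ P` and `|B' ∩ P| = j - 1`. -/
theorem ball_shrinking_one
    (d : ℕ) (hd : 1 ≤ d)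
    (P : Set (EuclideanSpace ℝ (Fin d))) (hP : P.Finite)
    (c : EuclideanSpace ℝ (Fin d)) (r : ℝ) (hr : 0 ≤ r)
    (j : ℕ) (hj : 1 ≤ j)
    (hcard : (P ∩ Metric.closedBall c r).ncard = j) :
    ∃ (c' : EuclideanSpace ℝ (Fin d)) (r' : ℝ), 0 ≤ r' ∧
      P ∩ Metric.closedBall c' r' ⊆ P ∩ Metric.closedBall c r ∧
      (P ∩ Metric.closedBall c' r').ncard = j - 1 :=
  ball_shrinking_one_general d hd P hP c r j hcard
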